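/- arXiv:2308.02775 — 4 statements merged into one kernel-verified Lean document; each statement's English description precedes it below -/
import Mathlib

section
/- Let R be a commutative ring of characteristic p, let c ∈ R, and set S = R[X]/(X^p − X − c). Let v be the image of X in S and let σ be the unique R-algebra automorphism of S which satisfies σ(v) = v + 1. Then S/R is a Galois extension of rings with group ⟨σ⟩ (a cyclic group of order p). -/
/-!
The automorphism `g(X) ↦ g(X + 1)` of `R[X]` fixes `X ^ p - X - c`, because
`(X + 1) ^ p = X ^ p + 1` in characteristic `p`, so it descends to `σ` on `S`. Then
`σ ^ k v - v = k`, which is a unit of `R` as soon as `p ∤ k`: this gives both `orderOf σ = p`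
and the Galois condition, with `s = v` for every maximal ideal. For the fixed ring, write
`x = g(v)` with `deg g < p`; then `σ x = x` forces `g(X + 1) = g(X)`, and the coefficient of
`X ^ (d - 1)`, `d = deg g`, yields `d * lc g = 0`. As `0 < d < p` would make `d` a unit,
`g` is constant.
-/

open Polynomial

namespace Polynomial

variable {R : Type*} [CommRing R]

theorem coeff_taylor_natDegree_sub_one (f : R[X]) (r : R) :
    (taylor r f).coeff (f.natDegree - 1) =
      f.coeff (f.natDegree - 1) + f.natDegree * r * f.leadingCoeff := by
  obtain hd | hd := Nat.eq_zero_or_pos f.natDegree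
  · rw [eq_C_of_natDegree_eq_zero hd]
    simp
  have hlin : (hasseDeriv (f.natDegree - 1) f).natDegree < 2 := by
    have := natDegree_hasseDeriv_le f (f.natDegree - 1)
    omega
  rw [taylor_coeff, eval_eq_sum_range' hlin, Finset.sum_range_succ, Finset.sum_range_one,
    hasseDeriv_coeff, hasseDeriv_coeff, zero_add, Nat.choose_self,
    show 1 + (f.natDegree - 1) = f.natDegree by omega, Nat.choose_symm hd, Nat.choose_one_right]
  simp only [Nat.cast_one, pow_zero, pow_one, leadingCoeff]
  ring

theorem natDegree_eq_zero_of_taylor_eq_self {p : ℕ} [CharP R p] (hp : p.Prime) {f : R[X]}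
    (hdeg : f.natDegree < p) {r : R} (hr : IsUnit r) (hf : taylor r f = f) :
    f.natDegree = 0 := by
  by_contra h
  have hd : IsUnit (f.natDegree : R) :=
    (CharP.isUnit_natCast_iff hp).2 (Nat.not_dvd_of_pos_of_lt (Nat.pos_of_ne_zero h) hdeg)
  have := coeff_taylor_natDegree_sub_one f r
  rw [hf, left_eq_add, mul_assoc, hd.mul_right_eq_zero, hr.mul_right_eq_zero,
    leadingCoeff_eq_zero] at this
  simp [this] at h

theorem monic_X_pow_sub_X_sub_C {p : ℕ} (hp : 1 < p) (c : R) : (X ^ p - X - C c).Monic := by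
  monicity!
  simp [hp.le, hp.not_ge]

theorem natDegree_X_pow_sub_X_sub_C [Nontrivial R] {p : ℕ} (hp : 1 < p) (c : R) :
    (X ^ p - X - C c).natDegree = p := by
  compute_degree!
  · simp [hp.ne, (Nat.zero_lt_of_lt hp).ne']
  · exact hp.le

theorem X_pow_sub_X_sub_C_ne_one [Nontrivial R] {p : ℕ} (hp : 1 < p) (c : R) :
    X ^ p - X - C c ≠ 1 := fun h => by
  have := natDegree_X_pow_sub_X_sub_C hp c
  rw [h, natDegree_one] at this
  omega

theorem taylor_X_pow_sub_X_sub_C (p : ℕ) [ExpChar R p] {a : R} (ha : a ^ p = a) (c : R) :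
    taylor a (X ^ p - X - C c) = X ^ p - X - C c := by
  simp only [map_sub, taylor_pow, taylor_X, taylor_C, add_pow_expChar, ← C_pow, ha]
  ring

end Polynomial

namespace AdjoinRoot

variable {R : Type*} [CommRing R] {f : R[X]}

theorem nontrivial_of_monic (hf : f.Monic) (hf1 : f ≠ 1) : Nontrivial (AdjoinRoot f) :=
  Ideal.Quotient.nontrivial_iff.mpr <| by
    rwa [Ne, Ideal.span_singleton_eq_top, hf.isUnit_iff]

theorem algEquiv_ext {e₁ e₂ : AdjoinRoot f ≃ₐ[R] AdjoinRoot f}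
    (h : e₁ (root f) = e₂ (root f)) : e₁ = e₂ :=
  AlgEquiv.coe_toAlgHom_injective (algHom_ext h)

theorem degree_modByMonicHom_lt [Nontrivial R] (hf : f.Monic) (x : AdjoinRoot f) :
    (modByMonicHom hf x).degree < f.degree := by
  obtain ⟨q, rfl⟩ := mk_surjective x
  exact modByMonicHom_mk hf q ▸ degree_modByMonic_lt q hf

theorem natDegree_modByMonicHom_lt (hf : f.Monic) (hf1 : f ≠ 1) (x : AdjoinRoot f) :
    (modByMonicHom hf x).natDegree < f.natDegree := by
  obtain ⟨q, rfl⟩ := mk_surjective x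
  exact modByMonicHom_mk hf q ▸ natDegree_modByMonic_lt q hf hf1

noncomputable def translate (t : R) (h : taylor t f = f) : AdjoinRoot f ≃ₐ[R] AdjoinRoot f :=
  Ideal.quotientEquivAlg _ _ (algEquivAevalXAddC t) <| by
    rw [Ideal.map_span, Set.image_singleton]
    simp [← comp_eq_aeval, ← taylor_apply, h]

variable {t : R} {h : taylor t f = f}

@[simp]
theorem translate_mk (g : R[X]) : translate t h (mk f g) = mk f (taylor t g) := by
  rw [taylor_apply]
  rfl

theorem translate_root : translate t h (root f) = root f + algebraMap R _ t := by
  rw [← mk_X, translate_mk, taylor_X, map_add, mk_X, mk_C, algebraMap_eq]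

theorem translate_pow_root (k : ℕ) :
    (translate t h ^ k) (root f) = root f + algebraMap R _ (k * t) := by
  induction k with
  | zero => simp
  | succ k ih =>
    rw [pow_succ', AlgEquiv.mul_apply, ih, map_add, translate_root, AlgEquiv.commutes,
      Nat.cast_succ, add_one_mul, map_add]
    ring

theorem taylor_modByMonicHom_of_translate_eq_self (hf : f.Monic) {x : AdjoinRoot f}
    (hx : translate t h x = x) : taylor t (modByMonicHom hf x) = modByMonicHom hf x := by
  nontriviality R
  have hdeg := degree_modByMonicHom_lt hf x
  set g := modByMonicHom hf x
  have hg : mk f g = x := mk_leftInverse hf x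
  calc taylor t g = taylor t g %ₘ f :=
        ((modByMonic_eq_self_iff hf).2 ((degree_taylor g t).trans_lt hdeg)).symm
    _ = modByMonicHom hf (translate t h (mk f g)) := by rw [translate_mk, modByMonicHom_mk]
    _ = g := by rw [hg, hx]

end AdjoinRoot

section ArtinSchreier

open AdjoinRoot

variable {R : Type*} [CommRing R] (p : ℕ) [hp : Fact p.Prime] [CharP R p] (c : R)

local notation "S" => AdjoinRoot (X ^ p - X - C c)

noncomputable def artinSchreierShift : S ≃ₐ[R] S :=
  translate 1 (taylor_X_pow_sub_X_sub_C p (one_pow p) c)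

local notation "σ" => artinSchreierShift p c

theorem artinSchreierShift_root : σ (root (X ^ p - X - C c)) = root (X ^ p - X - C c) + 1 := by
  rw [artinSchreierShift, translate_root, map_one]

theorem artinSchreierShift_pow_root (k : ℕ) :
    (σ ^ k) (root (X ^ p - X - C c)) = root (X ^ p - X - C c) + (k : S) := by
  rw [artinSchreierShift, translate_pow_root, mul_one, map_natCast]

theorem artinSchreierShift_pow_char : σ ^ p = 1 := by
  refine algEquiv_ext ?_
  rw [artinSchreierShift_pow_root, ← map_natCast (algebraMap R S), CharP.cast_eq_zero, map_zero,
    add_zero, AlgEquiv.one_apply]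

theorem isUnit_artinSchreierShift_pow_root_sub_root {k : ℕ} (hk : ¬p ∣ k) :
    IsUnit ((σ ^ k) (root (X ^ p - X - C c)) - root (X ^ p - X - C c)) := by
  rw [artinSchreierShift_pow_root, add_sub_cancel_left, ← map_natCast (algebraMap R S)]
  exact ((CharP.isUnit_natCast_iff hp.out).2 hk).map _

theorem orderOf_artinSchreierShift : orderOf σ = p := by
  have : Nontrivial R := CharP.nontrivial_of_char_ne_one hp.out.ne_one
  have : Nontrivial S := nontrivial_of_monic (monic_X_pow_sub_X_sub_C hp.out.one_lt c)
    (X_pow_sub_X_sub_C_ne_one hp.out.one_lt c)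
  refine orderOf_eq_prime (artinSchreierShift_pow_char p c) fun h => ?_
  have := isUnit_artinSchreierShift_pow_root_sub_root p c (k := 1) hp.out.not_dvd_one
  rw [pow_one, h, AlgEquiv.one_apply, sub_self] at this
  exact not_isUnit_zero this

theorem exists_artinSchreierShift_pow_apply_sub_notMem {M : Ideal S} (hM : M ≠ ⊤) {k : ℕ}
    (hk : σ ^ k ≠ 1) : ∃ s, (σ ^ k) s - s ∉ M := by
  have hpk : ¬p ∣ k := by
    rintro ⟨m, rfl⟩
    rw [pow_mul, artinSchreierShift_pow_char, one_pow] at hk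
    exact hk rfl
  exact ⟨root _, fun hmem =>
    hM (M.eq_top_of_isUnit_mem hmem (isUnit_artinSchreierShift_pow_root_sub_root p c hpk))⟩

theorem artinSchreierShift_apply_eq_self_iff {x : S} :
    σ x = x ↔ x ∈ (algebraMap R S).range := by
  refine ⟨fun hx => ?_, by rintro ⟨r, rfl⟩; exact AlgEquiv.commutes _ r⟩
  have hmonic := monic_X_pow_sub_X_sub_C hp.out.one_lt c
  have : Nontrivial R := CharP.nontrivial_of_char_ne_one hp.out.ne_one
  set g := modByMonicHom hmonic x
  have hfix : taylor 1 g = g := taylor_modByMonicHom_of_translate_eq_self hmonic hx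
  have hdeg : g.natDegree < p := natDegree_X_pow_sub_X_sub_C hp.out.one_lt c ▸
    natDegree_modByMonicHom_lt hmonic (X_pow_sub_X_sub_C_ne_one hp.out.one_lt c) x
  have hconst : g.natDegree = 0 :=
    natDegree_eq_zero_of_taylor_eq_self hp.out hdeg isUnit_one hfix
  refine ⟨g.coeff 0, ?_⟩
  rw [AdjoinRoot.algebraMap_eq, ← mk_C, ← eq_C_of_natDegree_eq_zero hconst, mk_leftInverse]

end ArtinSchreier

theorem artinSchreier_ring_extension_isGalois
    (p : ℕ) (hp : p.Prime) (R : Type*) [CommRing R] [CharP R p] (c : R) :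
    ∃ σ : AdjoinRoot (X ^ p - X - C c) ≃ₐ[R] AdjoinRoot (X ^ p - X - C c),
      -- σ is the unique R-algebra automorphism sending v to v + 1
      σ (AdjoinRoot.root (X ^ p - X - C c)) = AdjoinRoot.root (X ^ p - X - C c) + 1 ∧
      (∀ τ : AdjoinRoot (X ^ p - X - C c) ≃ₐ[R] AdjoinRoot (X ^ p - X - C c),
        τ (AdjoinRoot.root (X ^ p - X - C c)) = AdjoinRoot.root (X ^ p - X - C c) + 1 →
        τ = σ) ∧
      -- ⟨σ⟩ is cyclic of order p
      orderOf σ = p ∧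
      -- R is the fixed ring of ⟨σ⟩
      (∀ x : AdjoinRoot (X ^ p - X - C c),
        (∀ k : ℕ, (σ ^ k) x = x) ↔ x ∈ (algebraMap R (AdjoinRoot (X ^ p - X - C c))).range) ∧
      -- the Galois condition for the group ⟨σ⟩
      (∀ M : Ideal (AdjoinRoot (X ^ p - X - C c)), M.IsMaximal →
        ∀ k : ℕ, σ ^ k ≠ 1 → ∃ s : AdjoinRoot (X ^ p - X - C c), (σ ^ k) s - s ∉ M) := by
  have := Fact.mk hp
  refine ⟨artinSchreierShift p c, artinSchreierShift_root p c,
    fun τ hτ => AdjoinRoot.algEquiv_ext (hτ.trans (artinSchreierShift_root p c).symm),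
    orderOf_artinSchreierShift p c, fun x => ⟨fun hx => ?_, ?_⟩,
    fun M hM k hk => exists_artinSchreierShift_pow_apply_sub_notMem p c hM.ne_top hk⟩
  · exact (artinSchreierShift_apply_eq_self_iff p c).1 (by simpa using hx 1)
  · rintro ⟨r, rfl⟩ k
    exact (artinSchreierShift p c ^ k).commutes r
end

section
/- Let S be a commutative ring of characteristic p and let G be a finite group of automorphisms of S of order p^n such that S is a Galois extension of the fixed ring R = S^G with group G. Then the group cohomology H^q(G, S) vanishes for all q ≥ 1, where G acts on the additive group of S through its action by ring automorphisms. -/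
/-!
The Galois condition makes the trace `tr = ∑ σ` surjective onto `R = S^G`. Otherwise `tr(S)` lies
in a maximal ideal of `R`, and since `S` is integral over `R` some maximal ideal `M` of `S` contains
`tr(S)`. But the Galois condition says exactly that the characters `s ↦ σ s mod M` of `S` into the
field `S/M` are pairwise distinct, so by Dedekind's independence theorem their sum is nonzero.

Pick `c` with `tr(c) = 1`. Then `s ↦ (g ↦ g • s)` exhibits `S` as a `G`-equivariant retract of the
coinduced module `Coind_1^G S`, with retraction `f ↦ ∑ₓ x⁻¹ • (c * f x)`, and the higher
cohomology of a coinduced module vanishes by Shapiro's lemma.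
-/

open CategoryTheory Limits

def IsGaloisRingExtension (G S : Type*) [Group G] [CommRing S] [MulSemiringAction G S] : Prop :=
  ∀ M : Ideal S, M.IsMaximal → ∀ σ : G, σ ≠ 1 → ∃ s : S, σ • s - s ∉ M

section Trace

variable {G S : Type*} [Group G] [CommRing S] [MulSemiringAction G S]

instance : Algebra.IsInvariant (FixedPoints.subring S G) S G where
  isInvariant b hb := ⟨⟨b, hb⟩, rfl⟩

lemma IsGaloisRingExtension.exists_smul_sub_smul_notMem (hgalois : IsGaloisRingExtension G S)
    {M : Ideal S} (hM : M.IsMaximal) {σ τ : G} (hστ : σ ≠ τ) : ∃ s : S, σ • s - τ • s ∉ M := by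
  have : (M.comap (MulSemiringAction.toRingEquiv G S τ)).IsMaximal :=
    Ideal.comap_isMaximal_of_equiv _
  obtain ⟨s, hs⟩ := hgalois _ this (τ⁻¹ * σ) (by rwa [Ne, inv_mul_eq_one, eq_comm])
  refine ⟨s, fun h => hs ?_⟩
  rwa [Ideal.mem_comap, MulSemiringAction.toRingEquiv_apply_apply, smul_sub, smul_smul,
    mul_inv_cancel_left]

variable [Fintype G]

lemma sum_smul_mem_fixedPoints (x : S) : ∑ g : G, g • x ∈ FixedPoints.subring S G := fun g => by
  rw [Finset.smul_sum]
  exact Fintype.sum_equiv (Equiv.mulLeft g) _ _ fun h => (mul_smul g h x).symm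

variable (G S) in
def fixedPointsTrace : S →ₗ[FixedPoints.subring S G] FixedPoints.subring S G where
  toFun x := ⟨∑ g : G, g • x, sum_smul_mem_fixedPoints x⟩
  map_add' x y := by ext; simp [Finset.sum_add_distrib]
  map_smul' r x := by
    ext
    change ∑ g : G, g • ((r : S) * x) = r * ∑ g : G, g • x
    simp only [smul_mul', r.2 _, Finset.mul_sum]

lemma IsGaloisRingExtension.exists_sum_smul_notMem (hgalois : IsGaloisRingExtension G S)
    {M : Ideal S} (hM : M.IsMaximal) : ∃ x : S, ∑ g : G, g • x ∉ M := by
  let χ : G → S →* S ⧸ M := fun σ =>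
    (Ideal.Quotient.mk M).toMonoidHom.comp (MulSemiringAction.toRingHom G S σ).toMonoidHom
  have hχ : Function.Injective χ := fun σ τ h => by
    by_contra hστ
    obtain ⟨s, hs⟩ := hgalois.exists_smul_sub_smul_notMem hM hστ
    exact hs (Ideal.Quotient.eq.1 (DFunLike.congr_fun h s))
  have hli := (linearIndependent_monoidHom S (S ⧸ M)).comp χ hχ
  by_contra! h
  refine one_ne_zero (Fintype.linearIndependent_iff.1 hli (fun _ => 1) ?_ 1)
  funext x
  simpa [χ, ← map_sum, Ideal.Quotient.eq_zero_iff_mem] using h x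

lemma IsGaloisRingExtension.exists_sum_smul_eq_one (hgalois : IsGaloisRingExtension G S) :
    ∃ c : S, ∑ g : G, g • c = 1 := by
  have : Algebra.IsIntegral (FixedPoints.subring S G) S := Algebra.IsInvariant.isIntegral _ S G
  have hmap : Ideal.map (algebraMap (FixedPoints.subring S G) S)
      (LinearMap.range (fixedPointsTrace G S)) = ⊤ := by
    by_contra hne
    obtain ⟨M, hM, hle⟩ := Ideal.exists_le_maximal _ hne
    obtain ⟨x, hx⟩ := hgalois.exists_sum_smul_notMem hM
    exact hx (hle (Ideal.mem_map_of_mem _ (LinearMap.mem_range_self _ x)))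
  rw [Ideal.map_eq_top_iff _ Subtype.val_injective (algebraMap_isIntegral_iff.2 this)] at hmap
  obtain ⟨c, hc⟩ := LinearMap.range_eq_top.1 hmap 1
  exact ⟨c, congrArg Subtype.val hc⟩

end Trace

section Cohomology

variable {k G : Type} [CommRing k] [Group G]

lemma isZero_groupCohomology_of_retract {A B : Rep k G} (h : Retract A B) (n : ℕ)
    (hB : IsZero (groupCohomology B n)) : IsZero (groupCohomology A n) :=
  have h' : Retract (groupCohomology A n) (groupCohomology B n) :=
    h.map (groupCohomology.functor k G n)
  hB.of_mono h'.i

noncomputable abbrev coind₁ (A : Rep k G) : Rep k G :=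
  Rep.coind (⊥ : Subgroup G).subtype (Rep.res (⊥ : Subgroup G).subtype A)

lemma isZero_groupCohomology_succ_coind₁ (A : Rep k G) (n : ℕ) :
    IsZero (groupCohomology (coind₁ A) (n + 1)) :=
  (isZero_groupCohomology_succ_of_subsingleton _ n).of_iso (groupCohomology.coindIso _ (n + 1))

noncomputable def toCoind₁ (A : Rep k G) : A ⟶ coind₁ A :=
  Rep.resCoindToHom _ _ _ (𝟙 _)

variable {S : Type} [Ring S] [MulSemiringAction G S] [Fintype G]

noncomputable def twistedTrace (c : S) :
    coind₁ (Rep.of (Representation.ofDistribMulAction ℤ G S)) ⟶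
      Rep.of (Representation.ofDistribMulAction ℤ G S) :=
  Rep.ofHom
  { toLinearMap := AddMonoidHom.toIntLinearMap
      { toFun f := ∑ x : G, x⁻¹ • (c * f.1 x)
        map_zero' := by simp
        map_add' f f' := by simp [mul_add, Finset.sum_add_distrib] }
    isIntertwining' g := by
      ext f
      change ∑ x : G, x⁻¹ • (c * f.1 (x * g)) = g • ∑ x : G, x⁻¹ • (c * f.1 x)
      rw [Finset.smul_sum]
      refine Fintype.sum_equiv (Equiv.mulRight g) _ _ fun x => ?_
      rw [Equiv.coe_mulRight, mul_inv_rev, smul_smul, mul_inv_cancel_left] }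

noncomputable def retractCoind₁OfSumSmulEqOne {c : S} (hc : ∑ g : G, g • c = 1) :
    Retract (Rep.of (Representation.ofDistribMulAction ℤ G S))
      (coind₁ (Rep.of (Representation.ofDistribMulAction ℤ G S))) where
  i := toCoind₁ _
  r := twistedTrace c
  retract := by
    ext s
    change ∑ x : G, x⁻¹ • (c * (x • s)) = s
    simp only [smul_mul', inv_smul_smul, ← Finset.sum_mul]
    rw [Fintype.sum_equiv (Equiv.inv G) (fun x => x⁻¹ • c) (· • c) fun _ => rfl, hc, one_mul]

lemma isZero_groupCohomology_succ_of_sum_smul_eq_one {c : S} (hc : ∑ g : G, g • c = 1) (n : ℕ) :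
    IsZero (groupCohomology (Rep.ofDistribMulAction ℤ G S) (n + 1)) :=
  isZero_groupCohomology_of_retract (retractCoind₁OfSumSmulEqOne hc) _
    (isZero_groupCohomology_succ_coind₁ _ n)

end Cohomology

theorem groupCohomology_vanishes_of_galois_ring_extension_general
    (S : Type) [CommRing S]
    (G : Type) [Group G] [Fintype G]
    [MulSemiringAction G S]
    -- S/R is a Galois extension of rings with group G (R = S^G is the fixed ring)
    (hgalois : ∀ M : Ideal S, M.IsMaximal → ∀ σ : G, σ ≠ 1 → ∃ s : S, σ • s - s ∉ M) :
    ∀ q : ℕ, 1 ≤ q →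
      CategoryTheory.Limits.IsZero (groupCohomology (Rep.ofDistribMulAction ℤ G S) q) := by
  obtain ⟨c, hc⟩ := IsGaloisRingExtension.exists_sum_smul_eq_one hgalois
  intro q hq
  obtain ⟨n, rfl⟩ : ∃ n, q = n + 1 := ⟨q - 1, by omega⟩
  exact isZero_groupCohomology_succ_of_sum_smul_eq_one hc n

theorem groupCohomology_vanishes_of_galois_ring_extension
    (p n : ℕ) (hp : p.Prime) (S : Type) [CommRing S] [CharP S p]
    (G : Type) [Group G] [Fintype G] (hG : Fintype.card G = p ^ n)
    [MulSemiringAction G S]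
    -- the action of G on S is faithful, so that G is a group of automorphisms of S
    (hfaithful : ∀ σ : G, (∀ s : S, σ • s = s) → σ = 1)
    -- S/R is a Galois extension of rings with group G (R = S^G is the fixed ring)
    (hgalois : ∀ M : Ideal S, M.IsMaximal → ∀ σ : G, σ ≠ 1 → ∃ s : S, σ • s - s ∉ M) :
    ∀ q : ℕ, 1 ≤ q →
      CategoryTheory.Limits.IsZero (groupCohomology (Rep.ofDistribMulAction ℤ G S) q) :=
  groupCohomology_vanishes_of_galois_ring_extension_general S G hgalois
end

section
/- Let S/R be a Galois extension of commutative rings of characteristic p with group G of order p^n. Let G̃ be a group of order p^{n+1} with a surjective homomorphism π : G̃ → G and kernel H = ker(π) of order p, let χ : H → F_p be an isomorphism, let u : G → G̃ be a set-theoretic section of π, and let c(σ,τ) = χ(u(σ)u(τ)u(στ)^{-1}) be the associated 2-cocycle with values in F_p ⊂ S. Let (s_σ)_{σ∈G} be a cochain with values in S such that c(σ,τ) = s_σ + σ(s_τ) − s_{στ} for all σ, τ ∈ G, and let d ∈ S satisfy ℘(s_σ) = σ(d) − d for all σ ∈ G, where ℘(X) = X^p − X. Then, viewing T = S[X]/(X^p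 − X − d) as an extension of S, the group G of automorphisms of S extends to a group of automorphisms of T which is isomorphic to G̃ and makes T/R a Galois extension of rings. -/
/-!
The kernel `H = ker π` has order `p` and is normal in the `p`-group `G̃`, so it is central.
Centrality turns `e g = s (π g) + χ (g u(π g)⁻¹)` into a crossed homomorphism
`e (g h) = e g + π g • e h` with `e g ^ p - e g = π g • d - d`, extending `χ` on `H`.
Writing `α` for the root of `X ^ p - X - d`, so `α ^ p = α + d`, the assignment
`g ↦ (π g on S, α ↦ α + e g)` is then an action of `G̃` on `T` by ring automorphisms, in
which `h ∈ H` acts as the translation `α ↦ α + χ h`.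
An element of `T` is `q(α)` with `deg q < p`; it is fixed by `α ↦ α + 1` only if `q(X + 1) = q`,
and comparing the coefficients of `X ^ (deg q - 1)` (where `deg q` is a unit in `S`) forces
`q` to be constant, so the fixed ring of `G̃` is `S ^ G = R`. For the Galois condition, a
nontrivial `h ∈ H` moves `α` by the unit `χ h`, and any other `g` reduces to the condition
for `S`, because maximal ideals of the integral extension `T` contract to maximal ideals of `S`.
-/

open Polynomial

theorem IsPGroup.le_center_of_card_eq {p : ℕ} [Fact p.Prime] {G : Type*} [Group G]
    (hG : IsPGroup p G) {K : Subgroup G} [K.Normal] (hK : Nat.card K = p) :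
    K ≤ Subgroup.center G := by
  have : Finite K := Nat.finite_of_card_ne_zero (hK ▸ (Fact.out : p.Prime).ne_zero)
  -- `G` acts on `K` by conjugation fixing `1`, and `#K ≡ #Kᴳ [MOD p]`, so `Kᴳ = K`
  have hfix : ∀ k : K, k ∈ MulAction.fixedPoints (ConjAct G) K := by
    by_contra! ⟨k, hk⟩
    have hmod := (hG.of_equiv ConjAct.toConjAct).card_modEq_card_fixedPoints K
    rw [hK] at hmod
    have hdvd := Nat.dvd_of_mod_eq_zero (Eq.trans hmod.symm (Nat.mod_self p))
    have hpos : 0 < Nat.card (MulAction.fixedPoints (ConjAct G) K) :=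
      Nat.card_pos_iff.mpr ⟨⟨⟨1, smul_one⟩⟩, inferInstance⟩
    exact (Nat.le_of_dvd hpos hdvd).not_gt (hK ▸ Finite.card_subtype_lt hk)
  intro k hk
  rw [Subgroup.mem_center_iff]
  intro g
  have := congrArg Subtype.val (hfix ⟨k, hk⟩ (ConjAct.toConjAct g))
  rw [ConjAct.Subgroup.val_conj_smul, ConjAct.smul_def, ConjAct.ofConjAct_toConjAct] at this
  exact mul_inv_eq_iff_eq_mul.mp this

theorem Polynomial.monic_X_pow_sub_X_sub_C_s4 {R : Type*} [CommRing R] {p : ℕ} (hp : 1 < p) (d : R) :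
    (X ^ p - X - C d).Monic := by
  rw [sub_sub]
  refine monic_X_pow_sub ((degree_add_le _ _).trans_lt (max_lt ?_ (degree_C_le.trans_lt ?_)))
  · exact degree_X_le.trans_lt (by exact_mod_cast hp)
  · exact_mod_cast zero_lt_one.trans hp

theorem Polynomial.natDegree_X_pow_sub_X_sub_C_s4 {R : Type*} [CommRing R] [Nontrivial R] {p : ℕ}
    (hp : 1 < p) (d : R) : (X ^ p - X - C d).natDegree = p := by
  rw [sub_sub, natDegree_sub_eq_left_of_natDegree_lt] <;>
    simp [hp]

theorem Polynomial.eq_C_of_taylor_one_eq {R : Type*} [CommRing R] {p : ℕ} [Fact p.Prime]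
    [CharP R p] {q : R[X]} (hq : q.natDegree < p) (h : taylor 1 q = q) : q = C (q.coeff 0) := by
  refine eq_C_of_natDegree_eq_zero ?_
  by_contra hn
  set n := q.natDegree
  have hcoeff : (taylor 1 q).coeff (n - 1) = q.coeff (n - 1) + n * q.coeff n := by
    rw [taylor_coeff, eval_eq_sum_range' (n := 2)]
    · have e1 : 1 + (n - 1) = n := by omega
      have e2 : n.choose (n - 1) = n := by
        rw [Nat.choose_symm (by omega), Nat.choose_one_right]
      simp [Finset.sum_range_succ, hasseDeriv_coeff, e1, e2]
    · exact (natDegree_hasseDeriv_le _ _).trans_lt (by omega)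
  rw [h, left_eq_add] at hcoeff
  have hunit : IsUnit (n : R) := (CharP.isUnit_natCast_iff Fact.out).mpr fun hdvd =>
    absurd (Nat.le_of_dvd (Nat.pos_of_ne_zero hn) hdvd) (by omega)
  exact leadingCoeff_ne_zero.mpr (by rintro rfl; exact hn natDegree_zero)
    ((hunit.mul_right_eq_zero).mp hcoeff)

theorem AdjoinRoot.ringHom_ext_algebraMap {R A : Type*} [CommRing R] [Semiring A] {f : R[X]}
    {φ ψ : AdjoinRoot f →+* A} (h : ∀ x, φ (algebraMap R _ x) = ψ (algebraMap R _ x))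
    (hroot : φ (root f) = ψ (root f)) : φ = ψ :=
  ringHom_ext (RingHom.ext h) hroot

theorem isUnit_castHom_toAdd {p : ℕ} [Fact p.Prime] {S K : Type*} [CommRing S] [CharP S p]
    [Group K] (χ : K ≃* Multiplicative (ZMod p)) {k : K} (hk : k ≠ 1) :
    IsUnit (ZMod.castHom (dvd_refl p) S (χ k).toAdd) :=
  (Ne.isUnit (by simpa using hk)).map _

namespace ArtinSchreier

variable {p : ℕ} {S : Type*} [CommRing S] (d : S)

local notation "T" => AdjoinRoot (X ^ p - X - C d)

theorem root_pow : AdjoinRoot.root (X ^ p - X - C d) ^ p =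
    AdjoinRoot.root (X ^ p - X - C d) + algebraMap S T d := by
  have := AdjoinRoot.eval₂_root (X ^ p - X - C d)
  simp only [eval₂_sub, eval₂_pow, eval₂_X, eval₂_C] at this
  rw [AdjoinRoot.algebraMap_eq]
  linear_combination this

variable [Fact p.Prime]

theorem monic : (X ^ p - X - C d).Monic :=
  monic_X_pow_sub_X_sub_C_s4 (Fact.out : p.Prime).one_lt d

variable [CharP S p]

theorem natDegree : (X ^ p - X - C d).natDegree = p := by
  have := CharP.nontrivial_of_char_ne_one (R := S) (Fact.out : p.Prime).ne_one
  exact natDegree_X_pow_sub_X_sub_C_s4 (Fact.out : p.Prime).one_lt d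

theorem eq_of_mk_eq_of_natDegree_lt {q r : S[X]} (hq : q.natDegree < p) (hr : r.natDegree < p)
    (h : AdjoinRoot.mk (X ^ p - X - C d) q = AdjoinRoot.mk _ r) : q = r := by
  have := CharP.nontrivial_of_char_ne_one (R := S) (Fact.out : p.Prime).ne_one
  have hmod : ∀ q : S[X], q.natDegree < p → q %ₘ (X ^ p - X - C d) = q := fun q hq =>
    (modByMonic_eq_self_iff (monic d)).mpr <| by
      rw [degree_eq_natDegree (monic d).ne_zero, natDegree d]
      exact (degree_le_natDegree).trans_lt (by exact_mod_cast hq)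
  rw [← hmod q hq, ← hmod r hr, ← AdjoinRoot.modByMonicHom_mk (monic d), h,
    AdjoinRoot.modByMonicHom_mk]

theorem algebraMap_injective : Function.Injective (algebraMap S T) := fun x y h =>
  C_injective <| eq_of_mk_eq_of_natDegree_lt d
    ((natDegree_C x).trans_lt (Fact.out : p.Prime).pos)
    ((natDegree_C y).trans_lt (Fact.out : p.Prime).pos) h

instance : CharP T p := charP_of_injective_algebraMap (algebraMap_injective d) p

noncomputable def lift (φ : S →+* S) (e : S) (he : e ^ p - e = φ d - d) : T →+* T :=
  AdjoinRoot.lift ((algebraMap S T).comp φ) (AdjoinRoot.root _ + algebraMap S T e) <| by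
    have h := congrArg (algebraMap S T) he
    simp only [map_sub, map_pow] at h
    simp only [eval₂_sub, eval₂_pow, eval₂_X, eval₂_C, RingHom.comp_apply, add_pow_char,
      root_pow]
    linear_combination h

variable {d}

theorem lift_algebraMap {φ : S →+* S} {e : S} (he : e ^ p - e = φ d - d) (x : S) :
    lift d φ e he (algebraMap S T x) = algebraMap S T (φ x) :=
  AdjoinRoot.lift_of _

theorem lift_root {φ : S →+* S} {e : S} (he : e ^ p - e = φ d - d) :
    lift d φ e he (AdjoinRoot.root _) = AdjoinRoot.root _ + algebraMap S T e :=
  AdjoinRoot.lift_root _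

theorem lift_id_one_mk (he : (1 : S) ^ p - 1 = RingHom.id S d - d) (q : S[X]) :
    lift d (RingHom.id S) 1 he (AdjoinRoot.mk _ q) = AdjoinRoot.mk _ (taylor 1 q) := by
  rw [lift, AdjoinRoot.lift_mk, ← AdjoinRoot.aeval_eq, taylor_apply, aeval_comp]
  simp [aeval_def]

theorem exists_algebraMap_eq_of_lift_id_one_eq (he : (1 : S) ^ p - 1 = RingHom.id S d - d) (t : T)
    (ht : lift d (RingHom.id S) 1 he t = t) : ∃ x : S, algebraMap S T x = t := by
  obtain ⟨r, rfl⟩ := AdjoinRoot.mk_surjective t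
  have hf : (X ^ p - X - C d).Monic := monic d
  set q := r %ₘ (X ^ p - X - C d)
  have hqt : AdjoinRoot.mk (X ^ p - X - C d) q = AdjoinRoot.mk _ r := by
    have := AdjoinRoot.mk_leftInverse hf (AdjoinRoot.mk _ r)
    rwa [AdjoinRoot.modByMonicHom_mk] at this
  have hq : q.natDegree < p := by
    refine natDegree d ▸ natDegree_modByMonic_lt r hf fun h => ?_
    have := natDegree d
    rw [h, natDegree_one] at this
    exact (Fact.out : p.Prime).ne_zero this.symm
  have hfix : taylor 1 q = q := by
    refine eq_of_mk_eq_of_natDegree_lt d (by rwa [natDegree_taylor]) hq ?_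
    rw [← lift_id_one_mk he, hqt, ht]
  refine ⟨q.coeff 0, ?_⟩
  rw [← hqt, AdjoinRoot.algebraMap_eq, ← AdjoinRoot.mk_C]
  exact congrArg _ (eq_C_of_taylor_one_eq hq hfix).symm

section Action

variable {G Gt : Type*} [Group G] [Group Gt] [MulSemiringAction G S] {π : Gt →* G} {e : Gt → S}
  (he_pow : ∀ g, e g ^ p - e g = π g • d - d)

noncomputable def liftEnd (g : Gt) : T →+* T :=
  lift d (MulSemiringAction.toRingHom G S (π g)) (e g) (he_pow g)

theorem liftEnd_algebraMap (g : Gt) (x : S) :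
    liftEnd he_pow g (algebraMap S T x) = algebraMap S T (π g • x) :=
  lift_algebraMap _ x

theorem liftEnd_root (g : Gt) :
    liftEnd he_pow g (AdjoinRoot.root _) = AdjoinRoot.root _ + algebraMap S T (e g) :=
  lift_root _

theorem liftEnd_mul (he_mul : ∀ g g', e (g * g') = e g + π g • e g') (g g' : Gt) :
    liftEnd he_pow (g * g') = (liftEnd he_pow g).comp (liftEnd he_pow g') := by
  refine AdjoinRoot.ringHom_ext_algebraMap (fun x => ?_) ?_ <;>
    simp only [RingHom.comp_apply, liftEnd_algebraMap, liftEnd_root, map_add, map_mul, mul_smul,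
      he_mul, add_assoc]

theorem liftEnd_one (he_mul : ∀ g g', e (g * g') = e g + π g • e g') :
    liftEnd he_pow 1 = RingHom.id T := by
  have he_one : e 1 = 0 := by simpa using he_mul 1 1
  refine AdjoinRoot.ringHom_ext_algebraMap (fun x => ?_) ?_ <;>
    simp only [RingHom.id_apply, liftEnd_algebraMap, liftEnd_root, map_one, one_smul, he_one,
      map_zero, add_zero]

variable (he_mul : ∀ g g', e (g * g') = e g + π g • e g')

noncomputable def liftAut : Gt →* RingAut T where
  toFun g := RingEquiv.ofRingHom (liftEnd he_pow g) (liftEnd he_pow g⁻¹)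
    (by rw [← liftEnd_mul he_pow he_mul, mul_inv_cancel, liftEnd_one he_pow he_mul])
    (by rw [← liftEnd_mul he_pow he_mul, inv_mul_cancel, liftEnd_one he_pow he_mul])
  map_one' := RingEquiv.ext fun t => RingHom.congr_fun (liftEnd_one he_pow he_mul) t
  map_mul' g g' := RingEquiv.ext fun t => RingHom.congr_fun (liftEnd_mul he_pow he_mul g g') t

theorem liftAut_algebraMap (g : Gt) (x : S) :
    liftAut he_pow he_mul g (algebraMap S T x) = algebraMap S T (π g • x) :=
  liftEnd_algebraMap he_pow g x

theorem liftAut_root (g : Gt) :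
    liftAut he_pow he_mul g (AdjoinRoot.root _) = AdjoinRoot.root _ + algebraMap S T (e g) :=
  liftEnd_root he_pow g

variable {χ : π.ker ≃* Multiplicative (ZMod p)}

theorem liftAut_injective (he_ker : ∀ k : π.ker, e k = ZMod.castHom (dvd_refl p) S (χ k).toAdd)
    (hfaithful : ∀ σ : G, (∀ s : S, σ • s = s) → σ = 1) :
    Function.Injective (liftAut he_pow he_mul) := by
  have := CharP.nontrivial_of_char_ne_one (R := S) (Fact.out : p.Prime).ne_one
  refine (injective_iff_map_eq_one _).mpr fun g hg => ?_
  have hfix : ∀ t, liftAut he_pow he_mul g t = t := fun t => RingEquiv.congr_fun hg t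
  have hk : π g = 1 := hfaithful _ fun x => algebraMap_injective d <| by
    rw [← liftAut_algebraMap he_pow he_mul, hfix]
  have he : e g = 0 := algebraMap_injective d <| by
    simpa [liftAut_root] using hfix (AdjoinRoot.root _)
  by_contra hg1
  exact (he_ker ⟨g, hk⟩ ▸ isUnit_castHom_toAdd χ (Subtype.coe_ne_coe.mp hg1)).ne_zero he

theorem liftAut_fixed_iff (he_ker : ∀ k : π.ker, e k = ZMod.castHom (dvd_refl p) S (χ k).toAdd)
    (hπ : Function.Surjective π) (t : T) :
    (∀ g, liftAut he_pow he_mul g t = t) ↔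
      ∃ x : S, (∀ σ : G, σ • x = x) ∧ algebraMap S T x = t := by
  refine ⟨fun ht => ?_, fun ⟨x, hx, hxt⟩ g => by rw [← hxt, liftAut_algebraMap, hx]⟩
  -- an element of `ker π` acting on `T` as the translation `α ↦ α + 1`
  obtain ⟨k, hk⟩ := χ.surjective (Multiplicative.ofAdd 1)
  have hone : (1 : S) ^ p - 1 = RingHom.id S d - d := by simp
  have htranslate : liftEnd he_pow k = lift d (RingHom.id S) 1 hone := by
    refine AdjoinRoot.ringHom_ext_algebraMap (fun x => ?_) ?_
    · rw [liftEnd_algebraMap, lift_algebraMap, k.2, one_smul, RingHom.id_apply]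
    · rw [liftEnd_root, lift_root, he_ker, hk, toAdd_ofAdd, map_one]
  obtain ⟨x, rfl⟩ := exists_algebraMap_eq_of_lift_id_one_eq hone t (htranslate ▸ ht k)
  refine ⟨x, fun σ => ?_, rfl⟩
  obtain ⟨g, rfl⟩ := hπ σ
  exact algebraMap_injective d (by rw [← liftAut_algebraMap he_pow he_mul]; exact ht g)

theorem exists_liftAut_sub_notMem
    (he_ker : ∀ k : π.ker, e k = ZMod.castHom (dvd_refl p) S (χ k).toAdd)
    (hgalois : ∀ M : Ideal S, M.IsMaximal → ∀ σ : G, σ ≠ 1 → ∃ s : S, σ • s - s ∉ M)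
    {M : Ideal T} (hM : M.IsMaximal) {g : Gt} (hg : g ≠ 1) :
    ∃ t, liftAut he_pow he_mul g t - t ∉ M := by
  by_cases hπg : π g = 1
  · refine ⟨AdjoinRoot.root _, fun hmem => hM.ne_top (M.eq_top_of_isUnit_mem hmem ?_)⟩
    rw [liftAut_root, add_sub_cancel_left, he_ker ⟨g, hπg⟩]
    exact (isUnit_castHom_toAdd χ (Subtype.coe_ne_coe.mp hg)).map _
  · have : Module.Finite S T := (monic d).finite_adjoinRoot
    obtain ⟨s, hs⟩ := hgalois _ (Ideal.isMaximal_comap_of_isIntegral_of_isMaximal M) _ hπg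
    refine ⟨algebraMap S T s, fun hmem => hs ?_⟩
    rwa [Ideal.mem_comap, map_sub, ← liftAut_algebraMap he_pow he_mul]

end Action

end ArtinSchreier

theorem smul_castHom {n : ℕ} {M R : Type*} [Monoid M] [Ring R] [CharP R n]
    [MulSemiringAction M R] (σ : M) (x : ZMod n) :
    σ • ZMod.castHom (dvd_refl n) R x = ZMod.castHom (dvd_refl n) R x :=
  RingHom.congr_fun (Subsingleton.elim
    ((MulSemiringAction.toRingHom M R σ).comp (ZMod.castHom (dvd_refl n) R)) _) x

section Cochain

variable {p : ℕ} [Fact p.Prime] {S G Gt : Type*} [CommRing S] [CharP S p] [Group G] [Group Gt]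
  [MulSemiringAction G S] {π : Gt →* G} {u : G → Gt} (hu : ∀ σ, π (u σ) = σ)

def kerPart (g : Gt) : π.ker :=
  ⟨g * (u (π g))⁻¹, by rw [MonoidHom.mem_ker, map_mul, map_inv, hu, mul_inv_cancel]⟩

variable (χ : π.ker ≃* Multiplicative (ZMod p)) (s : G → S)

noncomputable def liftCochain (g : Gt) : S :=
  s (π g) + ZMod.castHom (dvd_refl p) S (χ (kerPart hu g)).toAdd

theorem liftCochain_pow_sub {d : S} (hd : ∀ σ : G, s σ ^ p - s σ = σ • d - d) (g : Gt) :
    liftCochain hu χ s g ^ p - liftCochain hu χ s g = π g • d - d := by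
  rw [liftCochain, add_pow_char, ← map_pow, ZMod.pow_card, ← hd]
  ring

variable {χ s}

theorem kerPart_mul (hmem : ∀ σ τ : G, u σ * u τ * (u (σ * τ))⁻¹ ∈ π.ker)
    (hcentral : π.ker ≤ Subgroup.center Gt) (g g' : Gt) :
    kerPart hu (g * g') = kerPart hu g * kerPart hu g' * ⟨_, hmem (π g) (π g')⟩ := by
  have hcomm := Subgroup.mem_center_iff.mp (hcentral (kerPart hu g').2) (u (π g))
  apply Subtype.ext
  simp only [kerPart, Subgroup.coe_mul, map_mul] at hcomm ⊢
  rw [← mul_inv_eq_iff_eq_mul.mpr hcomm]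
  group

theorem liftCochain_mul (hmem : ∀ σ τ : G, u σ * u τ * (u (σ * τ))⁻¹ ∈ π.ker)
    (hs : ∀ σ τ : G,
      ZMod.castHom (dvd_refl p) S (χ ⟨_, hmem σ τ⟩).toAdd = s σ + σ • s τ - s (σ * τ))
    (hcentral : π.ker ≤ Subgroup.center Gt) (g g' : Gt) :
    liftCochain hu χ s (g * g') = liftCochain hu χ s g + π g • liftCochain hu χ s g' := by
  simp only [liftCochain, kerPart_mul hu hmem hcentral, map_mul, toAdd_mul, map_add, hs, smul_add,
    smul_castHom]
  ring

theorem liftCochain_of_mem_ker (hmem : ∀ σ τ : G, u σ * u τ * (u (σ * τ))⁻¹ ∈ π.ker)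
    (hs : ∀ σ τ : G,
      ZMod.castHom (dvd_refl p) S (χ ⟨_, hmem σ τ⟩).toAdd = s σ + σ • s τ - s (σ * τ))
    (k : π.ker) : liftCochain hu χ s k = ZMod.castHom (dvd_refl p) S (χ k).toAdd := by
  have hu1 : u 1 ∈ π.ker := hu 1
  have hs1 : ZMod.castHom (dvd_refl p) S (χ ⟨u 1, hu1⟩).toAdd = s 1 := by
    have h11 : (⟨_, hmem 1 1⟩ : π.ker) = ⟨u 1, hu1⟩ := Subtype.ext (by simp)
    have := hs 1 1
    rw [h11, one_smul, mul_one] at this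
    linear_combination this
  have hk : π k = 1 := k.2
  have hkerPart : kerPart hu k = k * (⟨u 1, hu1⟩ : π.ker)⁻¹ := Subtype.ext <| by
    simp [kerPart, hk]
  simp only [liftCochain, hkerPart, map_mul, map_inv, toAdd_mul, toAdd_inv, map_add, map_neg, hs1,
    hk]
  ring

end Cochain

theorem saltman_lemma_a_general
    (p n : ℕ) (hp : p.Prime) (S : Type*) [CommRing S] [CharP S p]
    (G : Type*) [Group G]
    [MulSemiringAction G S]
    (hfaithful : ∀ σ : G, (∀ s : S, σ • s = s) → σ = 1)
    -- S/R is Galois with group G, R = S^G: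
    (hgalois : ∀ M : Ideal S, M.IsMaximal → ∀ σ : G, σ ≠ 1 → ∃ s : S, σ • s - s ∉ M)
    (Gt : Type*) [Group Gt] [Fintype Gt] (hGt : Fintype.card Gt = p ^ (n + 1))
    (π : Gt →* G) (hπ : Function.Surjective π) (hker : Nat.card π.ker = p)
    (χ : π.ker ≃* Multiplicative (ZMod p))
    (u : G → Gt) (hu : ∀ g : G, π (u g) = g)
    (hmem : ∀ σ τ : G, u σ * u τ * (u (σ * τ))⁻¹ ∈ π.ker)
    (s_ : G → S)
    -- the cochain (s_σ) splits the 2-cocycle c(σ,τ) = χ(u(σ)u(τ)u(στ)⁻¹):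
    (hs : ∀ σ τ : G,
      (ZMod.castHom (dvd_refl p) S) (Multiplicative.toAdd (χ ⟨_, hmem σ τ⟩)) =
        s_ σ + σ • s_ τ - s_ (σ * τ))
    (d : S) (hd : ∀ σ : G, s_ σ ^ p - s_ σ = σ • d - d) :
    ∃ ρ : Gt →* RingAut (AdjoinRoot (X ^ p - X - C d)),
      -- the group of automorphisms is isomorphic to G̃
      Function.Injective ρ ∧
      -- it extends the action of G on S
      (∀ g : Gt, ∀ x : S,
        ρ g (algebraMap S (AdjoinRoot (X ^ p - X - C d)) x) =
          algebraMap S (AdjoinRoot (X ^ p - X - C d)) (π g • x)) ∧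
      -- the fixed ring of G̃ acting on T is R = S^G
      (∀ t : AdjoinRoot (X ^ p - X - C d),
        (∀ g : Gt, ρ g t = t) ↔
          ∃ x : S, (∀ σ : G, σ • x = x) ∧
            algebraMap S (AdjoinRoot (X ^ p - X - C d)) x = t) ∧
      -- T/R is a Galois extension of rings with group G̃
      (∀ M : Ideal (AdjoinRoot (X ^ p - X - C d)), M.IsMaximal →
        ∀ g : Gt, g ≠ 1 → ∃ t : AdjoinRoot (X ^ p - X - C d), ρ g t - t ∉ M) := by
  have := Fact.mk hp
  have hcentral : π.ker ≤ Subgroup.center Gt :=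
    (IsPGroup.of_card (by rw [Nat.card_eq_fintype_card, hGt])).le_center_of_card_eq hker
  have he_pow := liftCochain_pow_sub hu χ s_ hd
  have he_mul := liftCochain_mul hu hmem hs hcentral
  have he_ker := liftCochain_of_mem_ker hu hmem hs
  exact ⟨ArtinSchreier.liftAut he_pow he_mul,
    ArtinSchreier.liftAut_injective he_pow he_mul he_ker hfaithful,
    ArtinSchreier.liftAut_algebraMap he_pow he_mul,
    ArtinSchreier.liftAut_fixed_iff he_pow he_mul he_ker hπ,
    fun _ hM _ hg => ArtinSchreier.exists_liftAut_sub_notMem he_pow he_mul he_ker hgalois hM hg⟩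

theorem saltman_lemma_a
    (p n : ℕ) (hp : p.Prime) (S : Type*) [CommRing S] [CharP S p]
    (G : Type*) [Group G] [Fintype G] (hG : Fintype.card G = p ^ n)
    [MulSemiringAction G S]
    (hfaithful : ∀ σ : G, (∀ s : S, σ • s = s) → σ = 1)
    -- S/R is Galois with group G, R = S^G:
    (hgalois : ∀ M : Ideal S, M.IsMaximal → ∀ σ : G, σ ≠ 1 → ∃ s : S, σ • s - s ∉ M)
    (Gt : Type*) [Group Gt] [Fintype Gt] (hGt : Fintype.card Gt = p ^ (n + 1))
    (π : Gt →* G) (hπ : Function.Surjective π) (hker : Nat.card π.ker = p)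
    (χ : π.ker ≃* Multiplicative (ZMod p))
    (u : G → Gt) (hu : ∀ g : G, π (u g) = g)
    (hmem : ∀ σ τ : G, u σ * u τ * (u (σ * τ))⁻¹ ∈ π.ker)
    (s_ : G → S)
    -- the cochain (s_σ) splits the 2-cocycle c(σ,τ) = χ(u(σ)u(τ)u(στ)⁻¹):
    (hs : ∀ σ τ : G,
      (ZMod.castHom (dvd_refl p) S) (Multiplicative.toAdd (χ ⟨_, hmem σ τ⟩)) =
        s_ σ + σ • s_ τ - s_ (σ * τ))
    (d : S) (hd : ∀ σ : G, s_ σ ^ p - s_ σ = σ • d - d) :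
    ∃ ρ : Gt →* RingAut (AdjoinRoot (X ^ p - X - C d)),
      -- the group of automorphisms is isomorphic to G̃
      Function.Injective ρ ∧
      -- it extends the action of G on S
      (∀ g : Gt, ∀ x : S,
        ρ g (algebraMap S (AdjoinRoot (X ^ p - X - C d)) x) =
          algebraMap S (AdjoinRoot (X ^ p - X - C d)) (π g • x)) ∧
      -- the fixed ring of G̃ acting on T is R = S^G
      (∀ t : AdjoinRoot (X ^ p - X - C d),
        (∀ g : Gt, ρ g t = t) ↔
          ∃ x : S, (∀ σ : G, σ • x = x) ∧
            algebraMap S (AdjoinRoot (X ^ p - X - C d)) x = t) ∧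
      -- T/R is a Galois extension of rings with group G̃
      (∀ M : Ideal (AdjoinRoot (X ^ p - X - C d)), M.IsMaximal →
        ∀ g : Gt, g ≠ 1 → ∃ t : AdjoinRoot (X ^ p - X - C d), ρ g t - t ∉ M) :=
  saltman_lemma_a_general p n hp S G hfaithful hgalois Gt hGt π hπ hker χ u hu hmem s_ hs d hd
end

section
/- Let S/R, G, G̃, H, and d ∈ S be as in the cocycle construction: S/R a Galois extension of commutative rings of characteristic p with group G of order p^n, G̃ of order p^{n+1} with surjection π : G̃ → G and kernel H of order p, and d ∈ S obtained from a cochain (s_σ) splitting the 2-cocycle of the extension via ℘(s_σ) = σ(d) − d. If S has no nontrivial idempotents and the group extension 1 → H → G̃ → G → 1 is not split, then d ∉ ℘(S) + R. -/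
-- idempotent trick
lemma saltc_zero_of_coprime {S : Type*} [CommRing S]
    (hidem : ∀ e : S, e * e = e → e = 0 ∨ e = 1)
    {u v : S} (hc : IsCoprime u v) (h : u * v = 0) : u = 0 ∨ v = 0 := by
  obtain ⟨x, y, hxy⟩ := hc
  have he : (x * u) * (x * u) = x * u := by
    linear_combination (x * u) * hxy - (x * y) * h
  rcases hidem _ he with h1 | h1
  · left; linear_combination (-u) * hxy + y * h + u * h1
  · right; linear_combination x * h - v * h1

open Polynomial in
lemma saltc_prod_eq (p : ℕ) (hp : p.Prime) [NeZero p] :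
    ∏ a : ZMod p, (X - C a) = (X ^ p - X : (ZMod p)[X]) := by
  haveI := Fact.mk hp
  have hcard : Fintype.card (ZMod p) = p := ZMod.card p
  have hmonic : (X ^ p - X : (ZMod p)[X]).Monic :=
    monic_X_pow_sub (by simpa using (Nat.one_lt_cast.mpr hp.one_lt : (1 : WithBot ℕ) < p))
  have hdeg : (X ^ p - X : (ZMod p)[X]).natDegree = p := by
    have := FiniteField.X_pow_card_sub_X_natDegree_eq (ZMod p) hp.one_lt
    exact this
  have hroots : (X ^ p - X : (ZMod p)[X]).roots = Finset.univ.val := by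
    have := FiniteField.roots_X_pow_card_sub_X (ZMod p)
    rwa [hcard] at this
  have := prod_multiset_X_sub_C_of_monic_of_roots_card_eq hmonic
    (by rw [hroots, hdeg]; simpa using hcard)
  rw [hroots] at this
  rw [← this]
  rfl

lemma saltc_root (p : ℕ) (hp : p.Prime) [NeZero p] {S : Type*} [CommRing S] [CharP S p] [Nontrivial S]
    (hidem : ∀ e : S, e * e = e → e = 0 ∨ e = 1)
    (t : S) (ht : t ^ p = t) : ∃ a : ZMod p, (ZMod.castHom (dvd_refl p) S) a = t := by
  haveI := Fact.mk hp
  set f : ZMod p →+* S := ZMod.castHom (dvd_refl p) S with hf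
  have hprod : ∏ a : ZMod p, (t - f a) = 0 := by
    have h3 := congrArg (Polynomial.eval₂ f t) (saltc_prod_eq p hp)
    rw [Polynomial.eval₂_finset_prod] at h3
    simp only [Polynomial.eval₂_sub, Polynomial.eval₂_X, Polynomial.eval₂_C,
      Polynomial.eval₂_pow] at h3
    rw [h3, ht, sub_self]
  have key : ∀ s : Finset (ZMod p), ∏ a ∈ s, (t - f a) = 0 → ∃ a, t - f a = 0 := by
    intro s
    induction s using Finset.induction_on with
    | empty => intro h; simp at h
    | @insert a s ha ih =>
      intro h
      rw [Finset.prod_insert ha] at h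
      have hc : IsCoprime (t - f a) (∏ b ∈ s, (t - f b)) := by
        apply IsCoprime.prod_right
        intro b hb
        have hab : a - b ≠ 0 := sub_ne_zero.mpr (fun h' => ha (h' ▸ hb))
        refine ⟨-f ((a - b)⁻¹), f ((a - b)⁻¹), ?_⟩
        have hinv : f ((a - b)⁻¹) * f (a - b) = 1 := by
          rw [← map_mul, inv_mul_cancel₀ hab, map_one]
        have : f (a - b) = f a - f b := map_sub f a b
        linear_combination hinv - f ((a-b)⁻¹) * this
      rcases saltc_zero_of_coprime hidem hc h with h1 | h1
      · exact ⟨a, h1⟩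
      · exact ih h1
  obtain ⟨a, ha⟩ := key Finset.univ hprod
  exact ⟨a, (sub_eq_zero.mp ha).symm⟩


lemma saltc_central (p N : ℕ) (hp : p.Prime) (Gt : Type*) [Group Gt] [Fintype Gt]
    (hGt : Fintype.card Gt = p ^ N)
    (K : Subgroup Gt) [K.Normal] (χ : K ≃* Multiplicative (ZMod p)) :
    ∀ (g : Gt) (h : K), g * ↑h * g⁻¹ = ↑h := by
  haveI := Fact.mk hp
  haveI : NeZero p := ⟨hp.ne_zero⟩
  set cn : Gt →* MulAut K := MulAut.conjNormal with hcn
  set F : Gt → ZMod p → ZMod p :=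
    fun g a => Multiplicative.toAdd (χ (cn g (χ.symm (Multiplicative.ofAdd a)))) with hF
  have hadd : ∀ g a b, F g (a + b) = F g a + F g b := by
    intro g a b
    simp only [hF, ofAdd_add, map_mul, toAdd_mul]
  have hlin : ∀ g a, F g a = F g 1 * a := by
    intro g a
    have hn : ∀ m : ℕ, F g (m : ZMod p) = F g 1 * m := by
      intro m; induction m with
      | zero =>
        have : F g 0 = 0 := by
          simp only [hF]
          simp
        simpa using this
      | succ k ih =>
        push_cast
        rw [hadd, ih, mul_add, mul_one]
    have := hn a.val
    rwa [ZMod.natCast_rightInverse a] at this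
  have hmul : ∀ g₁ g₂, F (g₁ * g₂) 1 = F g₁ 1 * F g₂ 1 := by
    intro g₁ g₂
    have h1 : F (g₁ * g₂) 1 = F g₁ (F g₂ 1) := by
      simp only [hF, map_mul]
      simp
    rw [h1, hlin]
  have hone : F 1 1 = 1 := by
    simp only [hF, map_one]
    simp
  have hpow : ∀ (g : Gt) (m : ℕ), F (g ^ m) 1 = (F g 1) ^ m := by
    intro g m; induction m with
    | zero => simpa using hone
    | succ k ih => rw [pow_succ, hmul, ih, pow_succ]
  have hfermat : ∀ (a : ZMod p) (m : ℕ), a ^ (p ^ m) = a := by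
    intro a m; induction m with
    | zero => simp
    | succ k ih => rw [pow_succ, pow_mul, ih, ZMod.pow_card]
  have hF1 : ∀ g : Gt, F g 1 = 1 := by
    intro g
    have h2 := hpow g (Fintype.card Gt)
    rw [pow_card_eq_one, hone, hGt] at h2
    rw [← hfermat (F g 1) N, ← h2]
  intro g h
  have h3 : cn g h = h := by
    apply χ.injective
    have h4 : χ (cn g h) = Multiplicative.ofAdd (F g (Multiplicative.toAdd (χ h))) := by
      simp [hF]
    rw [h4, hlin, hF1, one_mul]
    simp
  calc g * ↑h * g⁻¹ = ↑(cn g h) := (MulAut.conjNormal_apply g h).symm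
  _ = ↑h := by rw [h3]


theorem saltman_lemma_c
    (p n : ℕ) (hp : p.Prime) (S : Type*) [CommRing S] [CharP S p]
    (G : Type*) [Group G] [Fintype G] (hG : Fintype.card G = p ^ n)
    [MulSemiringAction G S]
    (hfaithful : ∀ σ : G, (∀ s : S, σ • s = s) → σ = 1)
    -- S/R is Galois with group G, R = S^G:
    (hgalois : ∀ M : Ideal S, M.IsMaximal → ∀ σ : G, σ ≠ 1 → ∃ s : S, σ • s - s ∉ M)
    (Gt : Type*) [Group Gt] [Fintype Gt] (hGt : Fintype.card Gt = p ^ (n + 1))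
    (π : Gt →* G) (hπ : Function.Surjective π) (hker : Nat.card π.ker = p)
    (χ : π.ker ≃* Multiplicative (ZMod p))
    (u : G → Gt) (hu : ∀ g : G, π (u g) = g)
    (hmem : ∀ σ τ : G, u σ * u τ * (u (σ * τ))⁻¹ ∈ π.ker)
    (s_ : G → S)
    -- the cochain (s_σ) splits the 2-cocycle c(σ,τ) = χ(u(σ)u(τ)u(στ)⁻¹):
    (hs : ∀ σ τ : G,
      (ZMod.castHom (dvd_refl p) S) (Multiplicative.toAdd (χ ⟨_, hmem σ τ⟩)) =
        s_ σ + σ • s_ τ - s_ (σ * τ))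
    (d : S) (hd : ∀ σ : G, s_ σ ^ p - s_ σ = σ • d - d)
    -- S has no nontrivial idempotents
    (hidem : ∀ e : S, e * e = e → e = 0 ∨ e = 1)
    -- the extension 1 → H → G̃ → G → 1 is not split
    (hnonsplit : ¬ ∃ ι : G →* Gt, ∀ g : G, π (ι g) = g) :
    -- then d ∉ ℘(S) + R
    ¬ ∃ x r : S, (∀ σ : G, σ • r = r) ∧ d = (x ^ p - x) + r := by
  rintro ⟨x, r, hr, hdx⟩
  haveI := Fact.mk hp
  haveI : NeZero p := ⟨hp.ne_zero⟩
  -- trivial ring case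
  by_cases htriv : (1 : S) = 0
  · apply hnonsplit
    have hall : ∀ a : S, a = 0 := fun a => by
      calc a = a * 1 := (mul_one a).symm
      _ = a * 0 := by rw [htriv]
      _ = 0 := mul_zero a
    refine ⟨1, fun g => ?_⟩
    have hg : g = 1 := hfaithful g (fun s => by rw [hall (g • s), hall s])
    rw [hg]; simp
  haveI : Nontrivial S := ⟨1, 0, htriv⟩
  set f : ZMod p →+* S := ZMod.castHom (dvd_refl p) S with hf
  have hfinj : Function.Injective f := f.injective
  -- ring automorphisms fix the image of f
  have hsmul_nat : ∀ (σ : G) (m : ℕ), σ • ((m : ℕ) : S) = ((m : ℕ) : S) := by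
    intro σ m
    exact map_natCast (MulSemiringAction.toRingHom G S σ) m
  have hfix : ∀ (σ : G) (a : ZMod p), σ • (f a : S) = f a := by
    intro σ a
    have h1 : (f a : S) = ((a.val : ℕ) : S) := by
      rw [hf, ZMod.castHom_apply, ← ZMod.natCast_val]
    rw [h1]
    exact hsmul_nat σ a.val
  -- the elements t σ are p-th roots of themselves
  set t : G → S := fun σ => s_ σ - (σ • x - x) with htdef
  have htp : ∀ σ, (t σ) ^ p = t σ := by
    intro σ
    have h1 : σ • d - d = σ • (x ^ p) - σ • x - (x ^ p - x) := by
      rw [hdx, smul_add, smul_sub, hr σ]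
      ring
    have h2 := hd σ
    rw [h1] at h2
    have h3 : (t σ) ^ p = s_ σ ^ p - (σ • (x ^ p) - x ^ p) := by
      rw [htdef]
      simp only
      rw [sub_pow_char, sub_pow_char, smul_pow']
    rw [h3, htdef]
    simp only
    linear_combination h2
  have hta : ∀ σ, ∃ a : ZMod p, f a = t σ := fun σ => saltc_root p hp hidem (t σ) (htp σ)
  choose a ha using hta
  -- cocycle identity descends to ZMod p
  have hcoc : ∀ σ τ : G,
      (Multiplicative.toAdd (χ ⟨_, hmem σ τ⟩)) = a σ + a τ - a (σ * τ) := by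
    intro σ τ
    apply hfinj
    rw [hs σ τ]
    have e1 : s_ σ = f (a σ) + (σ • x - x) := by
      rw [ha σ, htdef]; simp only; ring
    have e2 : s_ τ = f (a τ) + (τ • x - x) := by
      rw [ha τ, htdef]; simp only; ring
    have e3 : s_ (σ * τ) = f (a (σ * τ)) + ((σ * τ) • x - x) := by
      rw [ha (σ * τ), htdef]; simp only; ring
    have e4 : σ • s_ τ = f (a τ) + ((σ * τ) • x - σ • x) := by
      rw [e2, smul_add, smul_sub, hfix σ (a τ), mul_smul]
    rw [e1, e3, e4, map_sub, map_add]
    ring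
  -- centrality of the kernel
  have hcent := saltc_central p (n + 1) hp Gt hGt π.ker χ
  have hcomm : ∀ (g : Gt) (h : π.ker), g * ↑h = ↑h * g := by
    intro g h
    have := hcent g h
    calc g * ↑h = g * ↑h * g⁻¹ * g := by group
    _ = ↑h * g := by rw [this]
  -- build the splitting
  set hh : G → π.ker := fun g => χ.symm (Multiplicative.ofAdd (a g)) with hhdef
  have hmul : ∀ g₁ g₂ : G,
      (↑(hh (g₁ * g₂)))⁻¹ * u (g₁ * g₂) = ((↑(hh g₁))⁻¹ * u g₁) * ((↑(hh g₂))⁻¹ * u g₂) := by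
    intro g₁ g₂
    set c : π.ker := ⟨u g₁ * u g₂ * (u (g₁ * g₂))⁻¹, hmem g₁ g₂⟩ with hcdef
    have hK : hh (g₁ * g₂) = c⁻¹ * (hh g₁ * hh g₂) := by
      apply χ.injective
      rw [map_mul, map_mul, map_inv]
      apply Multiplicative.toAdd.injective
      have hc := hcoc g₁ g₂
      simp only [hhdef, MulEquiv.apply_symm_apply, toAdd_mul, toAdd_inv, toAdd_ofAdd]
      rw [← hcdef] at hc
      rw [hc]
      ring
    have hcoe : (↑(hh (g₁ * g₂)) : Gt) = (↑c)⁻¹ * (↑(hh g₁) * ↑(hh g₂)) := by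
      rw [hK]
      push_cast
      group
    have hcu : (↑c : Gt) * u (g₁ * g₂) = u g₁ * u g₂ := by
      rw [hcdef]
      simp only [Subgroup.coe_mk]
      group
    have hu12 : u (g₁ * g₂) = (↑c)⁻¹ * (u g₁ * u g₂) := by
      rw [← hcu]; group
    have key : ∀ (y z : Gt) (h : π.ker), y * ((↑h)⁻¹ * z) = (↑h)⁻¹ * (y * z) := by
      intro y z h
      have h2 : y * (↑h)⁻¹ = (↑h)⁻¹ * y := by
        have h3 := hcomm y h
        calc y * (↑h)⁻¹ = (↑h)⁻¹ * (y * ↑h) * (↑h)⁻¹ := by rw [h3]; group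
        _ = (↑h)⁻¹ * y := by group
      rw [← mul_assoc, h2, mul_assoc]
    rw [hcoe, hu12,
      show ((↑(hh g₁))⁻¹ * u g₁) * ((↑(hh g₂))⁻¹ * u g₂)
        = (↑(hh g₂))⁻¹ * (((↑(hh g₁))⁻¹ * u g₁) * u g₂) from key _ _ _]
    group
  apply hnonsplit
  refine ⟨MonoidHom.mk' (fun g => (↑(hh g))⁻¹ * u g) hmul, fun g => ?_⟩
  simp only [MonoidHom.mk'_apply]
  rw [map_mul, map_inv]
  have : π ↑(hh g) = 1 := (hh g).property
  rw [this, inv_one, one_mul, hu]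
end
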